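/- arXiv:2204.01595 — 2 statements merged into one kernel-verified Lean document; each statement's English description precedes it below -/
import Mathlib

section
/- Let n ≥ 1 and d ≥ 0, and let P ∈ ℝ[X_1,…,X_n] be a non-zero multi-affine polynomial of total degree at most d. Then the complement ℝ^n \ Z(P, ℝ^n) = {x ∈ ℝ^n : P(x) ≠ 0} has at most 2^d connected components (with respect to the Euclidean topology on ℝ^n). -/
/-!
Induction on the degree. If `P` is not constant, choose a variable `Xᵢ` occurring in `P` and
write `P = A * Xᵢ + B` with `A = ∂P/∂Xᵢ` and `B` free of `Xᵢ`; then `A` is a non-zero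
multi-affine polynomial of smaller degree. A connected component `K` of `{P ≠ 0}` is open, so it
contains a point `y` with `A y ≠ 0`. On the line through `y` in direction `i`, `P` is affine with
non-zero slope, so `y` lies strictly above or below its root. Over the component of `{A ≠ 0}`
containing `y`, the points on that same side of the root form a connected set avoiding `{P = 0}`,
so this "sheet" lies in `K`. Distinct components of `{P ≠ 0}` thus contain distinct sheets, and
there are twice as many sheets as components of `{A ≠ 0}`.
-/

open MvPolynomial Set

theorem Set.PairwiseDisjoint.finite_and_ncard_le_of_forall_exists_subset {α β : Type*}
    {S : Set (Set α)} {T : Set β} (hS : S.PairwiseDisjoint id) (hT : T.Finite)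
    (g : β → Set α) (hg : ∀ b ∈ T, (g b).Nonempty) (hcover : ∀ K ∈ S, ∃ b ∈ T, g b ⊆ K) :
    S.Finite ∧ S.ncard ≤ T.ncard := by
  rcases S.eq_empty_or_nonempty with rfl | ⟨K₀, hK₀⟩
  · simp
  have : Nonempty β := ⟨(hcover K₀ hK₀).choose⟩
  choose! f hfT hfg using hcover
  have hinj : InjOn f S := fun K hK K' hK' hKK' => by
    by_contra hne
    obtain ⟨a, ha⟩ := hg _ (hfT K hK)
    exact (hS hK hK' hne).le_bot ⟨hfg K hK ha, hfg K' hK' (hKK' ▸ ha : a ∈ g (f K'))⟩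
  exact ⟨Finite.of_injOn hfT hinj hT, ncard_le_ncard_of_injOn f hfT hinj hT⟩

section Components

variable {X : Type*} [TopologicalSpace X]

def componentsIn (U : Set X) : Set (Set X) := {K | ∃ x ∈ U, K = connectedComponentIn U x}

theorem pairwiseDisjoint_componentsIn (U : Set X) : (componentsIn U).PairwiseDisjoint id := by
  rintro _ ⟨x, -, rfl⟩ _ ⟨y, -, rfl⟩ hne
  refine Set.disjoint_left.mpr fun z hzx hzy => hne ?_
  rw [connectedComponentIn_eq hzx, connectedComponentIn_eq hzy]

theorem componentsIn_univ [PreconnectedSpace X] [Nonempty X] :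
    componentsIn (univ : Set X) = {univ} := by
  simp [componentsIn, connectedComponentIn_univ, PreconnectedSpace.connectedComponent_eq_univ]

end Components

namespace MvPolynomial

variable {ι R : Type*} [CommRing R]

theorem add_single_mem_support_of_mem_support_pderiv [DecidableEq ι] {i : ι}
    {P : MvPolynomial ι R} {m : ι →₀ ℕ} (hm : m ∈ (pderiv i P).support) :
    m + Finsupp.single i 1 ∈ P.support := by
  rw [mem_support_iff, coeff_pderiv] at hm
  exact mem_support_iff.mpr (left_ne_zero_of_mul hm)

theorem degreeOf_pderiv_le (i j : ι) (P : MvPolynomial ι R) :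
    degreeOf j (pderiv i P) ≤ degreeOf j P := by
  classical
  refine degreeOf_le_iff.mpr fun m hm => ?_
  exact le_self_add.trans <|
    monomial_le_degreeOf j (add_single_mem_support_of_mem_support_pderiv hm)

theorem totalDegree_pderiv_le (i : ι) (P : MvPolynomial ι R) :
    (pderiv i P).totalDegree ≤ P.totalDegree - 1 := by
  classical
  refine Finset.sup_le fun m hm => ?_
  have := le_totalDegree (add_single_mem_support_of_mem_support_pderiv hm)
  rw [Finsupp.sum_add_index' (fun _ => rfl) (fun _ _ _ => rfl),
    Finsupp.sum_single_index rfl] at this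
  omega

theorem exists_pderiv_ne_zero [NoZeroDivisors R] [CharZero R] {P : MvPolynomial ι R}
    (hP : P.totalDegree ≠ 0) : ∃ i, pderiv i P ≠ 0 := by
  classical
  obtain ⟨m, hm, i, hi⟩ : ∃ m ∈ P.support, ∃ i, m i ≠ 0 := by
    by_contra! h
    exact hP ((totalDegree_eq_zero_iff _ P).mpr h)
  refine ⟨i, fun h => ?_⟩
  have hsub : m - Finsupp.single i 1 + Finsupp.single i 1 = m :=
    tsub_add_cancel_of_le (Finsupp.single_le_iff.mpr (Nat.one_le_iff_ne_zero.mpr hi))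
  have := coeff_pderiv (i := i) P (m - Finsupp.single i 1)
  rw [h, coeff_zero, hsub, eq_comm] at this
  exact mul_ne_zero (mem_support_iff.mp hm) (by norm_cast) this

variable [DecidableEq ι] {i : ι}

theorem eval_update_monomial_of_eq_zero (x : ι → R) (t : R) {m : ι →₀ ℕ} (hm : m i = 0)
    (c : R) : eval (Function.update x i t) (monomial m c) = eval x (monomial m c) := by
  simp only [eval_monomial]
  congr 1
  refine Finsupp.prod_congr fun j hj => ?_
  rw [Function.update_of_ne (by rintro rfl; exact Finsupp.mem_support_iff.mp hj hm)]

omit [DecidableEq ι] in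
theorem pderiv_monomial_of_eq_zero {m : ι →₀ ℕ} (hm : m i = 0) (c : R) :
    pderiv i (monomial m c) = 0 := by
  rw [pderiv_monomial, hm, Nat.cast_zero, mul_zero, monomial_zero]

theorem eval_update_monomial (x : ι → R) (t : R) {m : ι →₀ ℕ} (hm : m i ≤ 1) (c : R) :
    eval (Function.update x i t) (monomial m c)
      = eval x (pderiv i (monomial m c)) * t + eval (Function.update x i 0) (monomial m c) := by
  rcases Nat.le_one_iff_eq_zero_or_eq_one.mp hm with h | h
  · rw [pderiv_monomial_of_eq_zero h, eval_update_monomial_of_eq_zero x t h,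
      eval_update_monomial_of_eq_zero x 0 h, map_zero, zero_mul, zero_add]
  · set m' := m - Finsupp.single i 1
    have hm' : m' i = 0 := by simp [m', h]
    have hsplit : monomial m c = monomial m' c * X i := by
      rw [X, monomial_mul, mul_one, tsub_add_cancel_of_le (Finsupp.single_le_iff.mpr h.ge)]
    simp only [hsplit, map_mul, eval_X, Function.update_self, pderiv_mul,
      pderiv_monomial_of_eq_zero hm', pderiv_X_self, eval_update_monomial_of_eq_zero x _ hm']
    rw [zero_mul, zero_add, mul_one, mul_zero, add_zero]

theorem eval_update_of_degreeOf_le_one {P : MvPolynomial ι R} (hP : degreeOf i P ≤ 1)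
    (x : ι → R) (t : R) :
    eval (Function.update x i t) P
      = eval x (pderiv i P) * t + eval (Function.update x i 0) P := by
  conv_lhs => rw [← P.support_sum_monomial_coeff]
  conv_rhs => rw [← P.support_sum_monomial_coeff]
  simp only [map_sum, Finset.sum_mul, ← Finset.sum_add_distrib]
  exact Finset.sum_congr rfl fun m hm =>
    eval_update_monomial x t ((monomial_le_degreeOf i hm).trans hP) _

end MvPolynomial

theorem MvPolynomial.exists_eval_ne_zero_of_isOpen {ι : Type*} [Fintype ι]
    {P : MvPolynomial ι ℝ} (hP : P ≠ 0) {W : Set (ι → ℝ)} (hW : IsOpen W) (hne : W.Nonempty) :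
    ∃ x ∈ W, eval x P ≠ 0 := by
  obtain ⟨x₀, hx₀⟩ := hne
  obtain ⟨ε, hε, hball⟩ := Metric.isOpen_iff.mp hW x₀ hx₀
  choose S hS hcard using fun j =>
    (infinite_of_mem_nhds (x₀ j) (Metric.ball_mem_nhds (x₀ j) hε)).exists_subset_card_eq
      (degreeOf j P + 1)
  by_contra! h
  refine hP (eq_zero_of_eval_zero_at_prod_finset P S (fun j => (hcard j).symm ▸ lt_add_one _)
    fun x hx => h x ?_)
  exact hball ((ball_pi x₀ hε).symm ▸ fun j _ => hS j (hx j))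

namespace MvPolynomial

variable {ι : Type*}

def nonzeroLocus (P : MvPolynomial ι ℝ) : Set (ι → ℝ) := {x | eval x P ≠ 0}

theorem isOpen_nonzeroLocus (P : MvPolynomial ι ℝ) : IsOpen (nonzeroLocus P) :=
  isOpen_compl_singleton.preimage (continuous_eval P)

variable [DecidableEq ι]

/-- Where `∂P/∂Xᵢ` does not vanish, the zero of the affine function `t ↦ P (update x i t)`. -/
noncomputable def rootAlong (P : MvPolynomial ι ℝ) (i : ι) (x : ι → ℝ) : ℝ :=
  -eval (Function.update x i 0) P / eval x (pderiv i P)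

/-- The points of the `i`-lines through `S` strictly above (`ε = 1`) or below (`ε = -1`) the
zero `rootAlong P i`. -/
def sheet (P : MvPolynomial ι ℝ) (i : ι) (S : Set (ι → ℝ)) (ε : ℝ) : Set (ι → ℝ) :=
  (fun p : (ι → ℝ) × ℝ => Function.update p.1 i (rootAlong P i p.1 + ε * p.2)) ''
    (S ×ˢ Ioi 0)

variable {P : MvPolynomial ι ℝ} {i : ι} {S : Set (ι → ℝ)} {ε : ℝ}

theorem eval_update_rootAlong_add (hPi : degreeOf i P ≤ 1) {x : ι → ℝ}
    (hx : eval x (pderiv i P) ≠ 0) (s : ℝ) :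
    eval (Function.update x i (rootAlong P i x + s)) P = eval x (pderiv i P) * s := by
  rw [eval_update_of_degreeOf_le_one hPi, rootAlong]
  field_simp
  ring

theorem sheet_subset_nonzeroLocus (hPi : degreeOf i P ≤ 1)
    (hS : S ⊆ nonzeroLocus (pderiv i P)) (hε : ε ≠ 0) : sheet P i S ε ⊆ nonzeroLocus P := by
  rintro _ ⟨⟨z, s⟩, ⟨hz, hs⟩, rfl⟩
  rw [nonzeroLocus, mem_ofPred_eq, eval_update_rootAlong_add hPi (hS hz)]
  exact mul_ne_zero (hS hz) (mul_ne_zero hε (ne_of_gt hs))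

theorem isPreconnected_sheet (hS : IsPreconnected S) (hSA : S ⊆ nonzeroLocus (pderiv i P)) :
    IsPreconnected (sheet P i S ε) := by
  refine (hS.prod isPreconnected_Ioi).image _ ?_
  have hroot : ContinuousOn (rootAlong P i) S :=
    ((continuous_eval P).comp (continuous_id.update i continuous_const)).continuousOn.neg.div
      (continuous_eval _).continuousOn hSA
  exact (continuous_update i).comp_continuousOn <| continuousOn_fst.prodMk <|
    (hroot.comp continuousOn_fst fun p hp => hp.1).add
      (continuous_const.mul continuous_snd).continuousOn

theorem exists_mem_sheet (hPi : degreeOf i P ≤ 1) {x : ι → ℝ} (hx : x ∈ nonzeroLocus P)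
    (hA : eval x (pderiv i P) ≠ 0) (hxS : x ∈ S) :
    ∃ ε ∈ ({-1, 1} : Set ℝ), x ∈ sheet P i S ε := by
  set δ := x i - rootAlong P i x
  have hδ : δ ≠ 0 := by
    rintro h
    apply hx
    have := eval_update_rootAlong_add hPi hA δ
    rwa [add_sub_cancel, Function.update_eq_self, h, mul_zero] at this
  have hx' : ∀ ε s, ε * s = δ → 0 < s → x ∈ sheet P i S ε := fun ε s h hs =>
    ⟨(x, s), ⟨hxS, hs⟩, by simp only [h, δ, add_sub_cancel, Function.update_eq_self]⟩
  rcases hδ.lt_or_gt with h | h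
  · exact ⟨-1, by simp, hx' (-1) (-δ) (by ring) (by linarith)⟩
  · exact ⟨1, by simp, hx' 1 δ (one_mul δ) h⟩

theorem exists_sheet_subset_of_mem_componentsIn [Fintype ι] (hPi : degreeOf i P ≤ 1)
    (hA : pderiv i P ≠ 0) {K : Set (ι → ℝ)} (hK : K ∈ componentsIn (nonzeroLocus P)) :
    ∃ p ∈ componentsIn (nonzeroLocus (pderiv i P)) ×ˢ ({-1, 1} : Set ℝ),
      sheet P i p.1 p.2 ⊆ K := by
  obtain ⟨x, hx, rfl⟩ := hK
  obtain ⟨y, hyK, hyA⟩ := exists_eval_ne_zero_of_isOpen hA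
    ((isOpen_nonzeroLocus P).connectedComponentIn) ⟨x, mem_connectedComponentIn hx⟩
  have hyU := connectedComponentIn_subset _ _ hyK
  obtain ⟨ε, hε, hyε⟩ := exists_mem_sheet hPi hyU hyA
    (mem_connectedComponentIn (F := nonzeroLocus (pderiv i P)) hyA)
  refine ⟨(_, ε), ⟨⟨y, hyA, rfl⟩, hε⟩, ?_⟩
  have hε0 : ε ≠ 0 := by rcases hε with rfl | rfl <;> norm_num
  rw [connectedComponentIn_eq hyK]
  exact (isPreconnected_sheet isPreconnected_connectedComponentIn
    (connectedComponentIn_subset _ _)).subset_connectedComponentIn hyε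
      (sheet_subset_nonzeroLocus hPi (connectedComponentIn_subset _ _) hε0)

omit [DecidableEq ι] in
theorem componentsIn_nonzeroLocus_C {c : ℝ} (hc : c ≠ 0) :
    componentsIn (nonzeroLocus (C c : MvPolynomial ι ℝ)) = {univ} := by
  rw [← componentsIn_univ]
  congr
  exact eq_univ_of_forall fun _ => by simpa [nonzeroLocus] using hc

theorem componentsIn_nonzeroLocus_finite_and_ncard_le [Fintype ι] {P : MvPolynomial ι ℝ}
    (hP : P ≠ 0) (hma : ∀ i, degreeOf i P ≤ 1) :
    (componentsIn (nonzeroLocus P)).Finite ∧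
      (componentsIn (nonzeroLocus P)).ncard ≤ 2 ^ P.totalDegree := by
  induction hd : P.totalDegree using Nat.strong_induction_on generalizing P with
  | _ d ih =>
  by_cases hd0 : d = 0
  · obtain ⟨c, rfl⟩ : ∃ c, P = C c := ⟨_, totalDegree_eq_zero_iff_eq_C.mp (hd ▸ hd0)⟩
    simp [componentsIn_nonzeroLocus_C (C_ne_zero.mp hP), hd0]
  obtain ⟨i, hA⟩ := exists_pderiv_ne_zero (hd ▸ hd0 : P.totalDegree ≠ 0)
  have hdA : (pderiv i P).totalDegree < d := (totalDegree_pderiv_le i P).trans_lt (by omega)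
  obtain ⟨hfin, hcard⟩ :=
    ih _ hdA hA (fun j => (degreeOf_pderiv_le i j P).trans (hma j)) rfl
  have hT := hfin.prod (toFinite ({-1, 1} : Set ℝ))
  have hne : ∀ p ∈ componentsIn (nonzeroLocus (pderiv i P)) ×ˢ ({-1, 1} : Set ℝ),
      (sheet P i p.1 p.2).Nonempty := by
    rintro p ⟨⟨y, hy, hp⟩, -⟩
    exact ⟨_, (y, 1), ⟨hp ▸ mem_connectedComponentIn hy, mem_Ioi.mpr one_pos⟩, rfl⟩
  obtain ⟨hfinP, hcardP⟩ :=
    (pairwiseDisjoint_componentsIn _).finite_and_ncard_le_of_forall_exists_subset hT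
      (fun p => sheet P i p.1 p.2) hne
      (fun K hK => exists_sheet_subset_of_mem_componentsIn (hma i) hA hK)
  refine ⟨hfinP, hcardP.trans ?_⟩
  calc _ = (componentsIn (nonzeroLocus (pderiv i P))).ncard * 2 := by
        rw [ncard_prod, ncard_pair (by norm_num)]
    _ ≤ 2 ^ (pderiv i P).totalDegree * 2 := Nat.mul_le_mul_right 2 hcard
    _ ≤ 2 ^ d := by rw [← pow_succ]; exact Nat.pow_le_pow_right two_pos hdA

end MvPolynomial

theorem multiaffine_complement_components_le_general (n d : ℕ)
    (P : MvPolynomial (Fin n) ℝ) (hP : P ≠ 0)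
    (hma : ∀ i : Fin n, P.degreeOf i ≤ 1)
    (hdeg : P.totalDegree ≤ d) :
    letI U : Set (Fin n → ℝ) := {x | eval x P ≠ 0}
    letI comps : Set (Set (Fin n → ℝ)) := {K | ∃ x ∈ U, K = connectedComponentIn U x}
    comps.Finite ∧ comps.ncard ≤ 2 ^ d := by
  obtain ⟨hfin, hcard⟩ := componentsIn_nonzeroLocus_finite_and_ncard_le hP hma
  exact ⟨hfin, hcard.trans (Nat.pow_le_pow_right two_pos hdeg)⟩

/-- The complement of the real zero set of a non-zero multi-affine polynomial of degree
at most `d` in `n` variables has at most `2^d` connected components. -/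
theorem multiaffine_complement_components_le (n d : ℕ) (hn : 1 ≤ n)
    (P : MvPolynomial (Fin n) ℝ) (hP : P ≠ 0)
    (hma : ∀ i : Fin n, P.degreeOf i ≤ 1)
    (hdeg : P.totalDegree ≤ d) :
    letI U : Set (Fin n → ℝ) := {x | eval x P ≠ 0}
    letI comps : Set (Set (Fin n → ℝ)) := {K | ∃ x ∈ U, K = connectedComponentIn U x}
    comps.Finite ∧ comps.ncard ≤ 2 ^ d :=
  multiaffine_complement_components_le_general n d P hP hma hdeg
end

section
/- Let n ≥ 1 and let P ∈ ℝ[X_1,…,X_n] be a multi-affine polynomial that is irreducible in ℝ[X_1,…,X_n]. Write P = X_n·Q + R with Q, R ∈ ℝ[X_1,…,X_{n−1}] (i.e., Q is the coefficient of X_n in P), and assume Q ≠ 0. Then no connected component of Z(P, ℝ^n) is contained in Z(Q, ℝ^n), where Q is regarded as a polynomial in ℝ[X_1,…,X_n] not involving X_n. -/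
/-!
Let `q = ∂P/∂xₖ`. As `P` is affine in `xₖ` with slope `q`, the `xₖ`-line through a point of
`Z(P) ∩ Z(q)` lies in `Z(P)`. It suffices to join every point `x` of `Z(P)` by a path in `Z(P)` to
a point where `q ≠ 0`; this is done by induction on the number of variables occurring in `P`.
If `q(x) = 0`, pick a variable `xⱼ` occurring in `q` and set `a = xⱼ(x)`, so that
`q = (xⱼ - a) ∂ⱼq + q|_{xⱼ=a}`:
* if `∂ⱼq(x) ≠ 0`, slide along `xₖ` to a point where `∂ⱼP = 0`, then along `xⱼ`;
* if `q|_{xⱼ=a} ≠ 0`, recurse on `P|_{xⱼ=a}` inside the hyperplane `xⱼ = a`;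
* otherwise `q = (xⱼ - a) ∂ⱼq`. If `P|_{xⱼ=a} = 0` the whole hyperplane lies in `Z(P)`: walk in it
  to a point where `∂ⱼq ≠ 0` and conclude as in the first case. If not, slide along `xₖ` to a
  slice `xₖ = c` on which `∂ⱼP ≠ 0`, recurse on `P|_{xₖ=c}` with `xⱼ` in the role of `xₖ`, and
  from the resulting point where `∂ⱼP ≠ 0` follow `Z(P)`, a graph over the other coordinates
  there, to a point where `∂ⱼq · P|_{xⱼ=a} ≠ 0`; such a point has `xⱼ ≠ a`, hence `q ≠ 0`.
-/

open MvPolynomial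

namespace MvPolynomial

variable {R σ : Type*}

theorem pderiv_pderiv_comm [CommSemiring R] (i j : σ) (p : MvPolynomial σ R) :
    pderiv i (pderiv j p) = pderiv j (pderiv i p) := by
  classical
  induction p using MvPolynomial.induction_on with
  | C a => simp
  | add p q hp hq => simp [hp, hq]
  | mul_X p l hp =>
    simp only [pderiv_mul, map_add, pderiv_X, hp]
    simp only [Pi.single_apply, apply_ite (pderiv _), pderiv_one, map_zero]
    split_ifs <;> simp [add_right_comm]

/-- Equivalent to `∀ i, p.degreeOf i ≤ 1` in characteristic zero. -/
def IsMultiAffine [CommSemiring R] (p : MvPolynomial σ R) : Prop :=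
  ∀ i, pderiv i (pderiv i p) = 0

theorem isMultiAffine_of_degreeOf_le_one [CommSemiring R] {p : MvPolynomial σ R}
    (hp : ∀ i, p.degreeOf i ≤ 1) : p.IsMultiAffine := fun i ↦ by
  ext m
  have hlt : p.degreeOf i < (m + Finsupp.single i 1 + Finsupp.single i 1 : σ →₀ ℕ) i := by
    simp only [Finsupp.add_apply, Finsupp.single_eq_same]
    have := hp i
    omega
  rw [coeff_pderiv, coeff_pderiv, coeff_zero,
    notMem_support_iff.mp (notMem_support_of_degreeOf_lt i hlt), zero_mul, zero_mul]

theorem IsMultiAffine.pderiv [CommSemiring R] {p : MvPolynomial σ R} (hp : p.IsMultiAffine)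
    (k : σ) : (pderiv k p).IsMultiAffine := fun i ↦ by
  rw [pderiv_pderiv_comm i k, pderiv_pderiv_comm i k, hp, map_zero]

theorem exists_pderiv_ne_zero_s4 [CommRing R] [IsDomain R] [CharZero R] {p : MvPolynomial σ R}
    (hp : p ≠ 0) {x : σ → R} (hx : eval x p = 0) : ∃ j, pderiv j p ≠ 0 := by
  classical
  obtain ⟨j, hj⟩ : p.vars.Nonempty := by
    rw [Finset.nonempty_iff_ne_empty, Ne, vars_eq_empty_iff_eq_C]
    intro hC
    rw [hC, eval_C] at hx
    exact hp (by rw [hC, hx, C_0])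
  obtain ⟨d, hd, hjd⟩ := (mem_vars_iff_mem_support j).mp hj
  refine ⟨j, fun h ↦ ?_⟩
  have hle : Finsupp.single j 1 ≤ d := by
    simpa [Finsupp.single_le_iff, Nat.one_le_iff_ne_zero] using hjd
  have := coeff_pderiv (i := j) p (d - Finsupp.single j 1)
  rw [h, coeff_zero, tsub_add_cancel_of_le hle, eq_comm] at this
  exact mul_ne_zero (mem_support_iff.mp hd) (Nat.cast_add_one_ne_zero _) (by exact_mod_cast this)

variable [DecidableEq σ]

section CommSemiring

variable [CommSemiring R]

noncomputable def specializeVar (j : σ) (a : R) : MvPolynomial σ R →ₐ[R] MvPolynomial σ R :=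
  aeval (Function.update X j (C a))

theorem eval_specializeVar (j : σ) (a : R) (p : MvPolynomial σ R) (v : σ → R) :
    eval v (specializeVar j a p) = eval (Function.update v j a) p := by
  induction p using MvPolynomial.induction_on with
  | C c => simp [specializeVar]
  | add p q hp hq => simp [hp, hq]
  | mul_X p l hp =>
    rcases eq_or_ne l j with rfl | h <;> simp_all [specializeVar]

theorem pderiv_specializeVar_self (j : σ) (a : R) (p : MvPolynomial σ R) :
    pderiv j (specializeVar j a p) = 0 := by
  induction p using MvPolynomial.induction_on with
  | C c => simp [specializeVar]
  | add p q hp hq => simp [hp, hq]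
  | mul_X p l hp =>
    rcases eq_or_ne l j with rfl | h <;> simp [specializeVar, *] at *

theorem pderiv_specializeVar_of_ne {i j : σ} (hij : i ≠ j) (a : R) (p : MvPolynomial σ R) :
    pderiv i (specializeVar j a p) = specializeVar j a (pderiv i p) := by
  induction p using MvPolynomial.induction_on with
  | C c => simp [specializeVar]
  | add p q hp hq => simp [hp, hq]
  | mul_X p l hp =>
    simp only [map_mul, pderiv_mul, hp, pderiv_X]
    rcases eq_or_ne l j with rfl | hlj
    · simp [specializeVar, hij.symm]
    · rcases eq_or_ne l i with rfl | hli <;> simp [specializeVar, *]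

theorem IsMultiAffine.specializeVar {p : MvPolynomial σ R} (hp : p.IsMultiAffine) (j : σ)
    (a : R) : (specializeVar j a p).IsMultiAffine := fun i ↦ by
  rcases eq_or_ne i j with rfl | hij
  · rw [pderiv_specializeVar_self, map_zero]
  · rw [pderiv_specializeVar_of_ne hij, pderiv_specializeVar_of_ne hij, hp, map_zero]

theorem ncard_pderiv_ne_zero_specializeVar_lt [Finite σ] {p : MvPolynomial σ R} {j : σ}
    (hj : pderiv j p ≠ 0) (a : R) :
    {i | pderiv i (specializeVar j a p) ≠ 0}.ncard < {i | pderiv i p ≠ 0}.ncard := by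
  refine Set.ncard_lt_ncard ⟨fun i hi ↦ ?_, fun hsub ↦ hsub hj (pderiv_specializeVar_self j a p)⟩
    (Set.toFinite _)
  rcases eq_or_ne i j with rfl | hij
  · exact absurd (pderiv_specializeVar_self i a p) hi
  · exact fun h ↦ hi (by rw [pderiv_specializeVar_of_ne hij, h, map_zero])

end CommSemiring

section CommRing

variable [CommRing R]

theorem polynomial_eval_aeval_update (v : σ → R) (k : σ) (p : MvPolynomial σ R) (c : R) :
    (aeval (Function.update (fun i ↦ Polynomial.C (v i)) k Polynomial.X) p).eval c =
      eval (Function.update v k c) p := by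
  induction p using MvPolynomial.induction_on with
  | C a => simp
  | add p q hp hq => simp [hp, hq]
  | mul_X p l hp =>
    rcases eq_or_ne l k with rfl | h <;> simp_all

theorem derivative_aeval_update (v : σ → R) (k : σ) (p : MvPolynomial σ R) :
    Polynomial.derivative (aeval (Function.update (fun i ↦ Polynomial.C (v i)) k Polynomial.X) p) =
      aeval (Function.update (fun i ↦ Polynomial.C (v i)) k Polynomial.X) (pderiv k p) := by
  induction p using MvPolynomial.induction_on with
  | C a => simp
  | add p q hp hq => simp [hp, hq]
  | mul_X p l hp =>
    rcases eq_or_ne l k with rfl | h <;> simp_all <;> ring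

variable [IsAddTorsionFree R]

theorem eval_update_eq_add_mul_pderiv {k : σ} {p : MvPolynomial σ R}
    (hp : pderiv k (pderiv k p) = 0) (v : σ → R) (c : R) :
    eval (Function.update v k c) p = eval v p + (c - v k) * eval v (pderiv k p) := by
  -- `φ p` is the restriction of `p` to the `k`-th coordinate line through `v`; it has degree `≤ 1`.
  set φ := aeval (R := R) (Function.update (fun i ↦ Polynomial.C (v i)) k Polynomial.X)
  have hφ (q : MvPolynomial σ R) (t : R) : (φ q).eval t = eval (Function.update v k t) q :=
    polynomial_eval_aeval_update v k q t
  have hφ' : Polynomial.derivative (Polynomial.derivative (φ p)) = 0 := by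
    rw [derivative_aeval_update, derivative_aeval_update, hp, map_zero]
  set d := (Polynomial.derivative (φ p)).coeff 0
  have hd : Polynomial.derivative (φ p) = Polynomial.C d :=
    Polynomial.eq_C_of_derivative_eq_zero hφ'
  have hline : φ p - Polynomial.C d * Polynomial.X =
      Polynomial.C ((φ p - Polynomial.C d * Polynomial.X).coeff 0) :=
    Polynomial.eq_C_of_derivative_eq_zero (by simp [hd])
  have hslope : eval v (pderiv k p) = d := by
    rw [← Function.update_eq_self k v, ← hφ, ← derivative_aeval_update, hd, Polynomial.eval_C]
  have h1 := congrArg (Polynomial.eval c) hline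
  have h2 := congrArg (Polynomial.eval (v k)) hline
  simp only [Polynomial.eval_sub, Polynomial.eval_mul, Polynomial.eval_C, Polynomial.eval_X, hφ,
    Function.update_eq_self] at h1 h2
  rw [hslope]
  linear_combination h1 - h2

theorem eval_update_of_pderiv_eq_zero {k : σ} {p : MvPolynomial σ R} (hp : pderiv k p = 0)
    (v : σ → R) (c : R) : eval (Function.update v k c) p = eval v p := by
  rw [eval_update_eq_add_mul_pderiv (by rw [hp, map_zero]) v c, hp, map_zero, mul_zero, add_zero]

theorem eval_eq_eval_specializeVar_add_mul_pderiv {j : σ} {p : MvPolynomial σ R}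
    (hp : pderiv j (pderiv j p) = 0) (a : R) (v : σ → R) :
    eval v p = eval v (specializeVar j a p) + (v j - a) * eval v (pderiv j p) := by
  have := eval_update_eq_add_mul_pderiv hp (Function.update v j a) (v j)
  rwa [Function.update_idem, Function.update_eq_self, Function.update_self,
    eval_update_of_pderiv_eq_zero hp, ← eval_specializeVar] at this

end CommRing

theorem exists_specializeVar_ne_zero [CommRing R] [IsDomain R] [Infinite R]
    {p : MvPolynomial σ R} (hp : p ≠ 0) (k : σ) : ∃ c, specializeVar k c p ≠ 0 := by
  by_contra! h
  refine hp (funext fun v ↦ ?_)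
  rw [← Function.update_eq_self k v, ← eval_specializeVar, h, map_zero, map_zero]

end MvPolynomial

theorem JoinedIn.mem_connectedComponentIn {X : Type*} [TopologicalSpace X] {F : Set X} {x y : X}
    (h : JoinedIn F x y) : y ∈ connectedComponentIn F x :=
  (isPathConnected_pathComponentIn h.source_mem).isConnected.isPreconnected
    |>.subset_connectedComponentIn (mem_pathComponentIn_self h.source_mem) pathComponentIn_subset h

namespace MvPolynomial

variable {σ : Type*}

theorem exists_mem_eval_ne_zero_of_isOpen [Fintype σ] {p : MvPolynomial σ ℝ} (hp : p ≠ 0)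
    {U : Set (σ → ℝ)} (hU : IsOpen U) {x : σ → ℝ} (hx : x ∈ U) : ∃ w ∈ U, eval w p ≠ 0 := by
  obtain ⟨ρ, hρ, hball⟩ := Metric.isOpen_iff.mp hU x hx
  by_contra! h
  refine hp (funext_set (fun i ↦ Metric.ball (x i) ρ) (fun i ↦ ?_) fun w hw ↦ ?_)
  · rw [Real.ball_eq_Ioo]
    exact Set.Ioo_infinite (by linarith)
  · rw [map_zero]
    exact h w (hball (by rwa [ball_pi x hρ]))

variable [DecidableEq σ]

theorem joinedIn_update {P : MvPolynomial σ ℝ} {k : σ} (hP : pderiv k (pderiv k P) = 0)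
    {v : σ → ℝ} (hv : eval v P = 0) (hv' : eval v (pderiv k P) = 0) (c : ℝ) :
    JoinedIn {w | eval w P = 0} v (Function.update v k c) := by
  have hline := (joinedIn_univ.2 (PathConnectedSpace.joined (v k) c)).map
    (continuous_const.update k continuous_id : Continuous fun t ↦ Function.update v k t)
  rw [Function.update_eq_self] at hline
  refine hline.mono ?_
  rintro _ ⟨t, -, rfl⟩
  simp [eval_update_eq_add_mul_pderiv hP, hv, hv']

theorem _root_.JoinedIn.update_of_specializeVar {P : MvPolynomial σ ℝ} {j : σ} {a : ℝ} {x z : σ → ℝ}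
    (h : JoinedIn {v | eval v (specializeVar j a P) = 0} x z) :
    JoinedIn {v | eval v P = 0} (Function.update x j a) (Function.update z j a) :=
  (h.map (continuous_id.update j continuous_const)).mono <| by
    rintro _ ⟨v, hv, rfl⟩
    simpa [eval_specializeVar] using hv

theorem exists_joinedIn_eval_ne_zero [Fintype σ] {P g : MvPolynomial σ ℝ} {j : σ}
    (hP : pderiv j (pderiv j P) = 0) {z : σ → ℝ} (hz : eval z P = 0)
    (hzj : eval z (pderiv j P) ≠ 0) (hg : g ≠ 0) (hgj : pderiv j g = 0) :
    ∃ w, JoinedIn {v | eval v P = 0} z w ∧ eval w g ≠ 0 := by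
  set U := {v : σ → ℝ | eval v (pderiv j P) ≠ 0}
  obtain ⟨ρ, hρ, hball⟩ :=
    Metric.isOpen_iff.mp (isOpen_ne_fun (continuous_eval _) continuous_const : IsOpen U) z hzj
  obtain ⟨w, hw, hgw⟩ := exists_mem_eval_ne_zero_of_isOpen hg Metric.isOpen_ball
    (Metric.mem_ball_self hρ)
  -- `N` is the Newton step in the `j`-th coordinate: it maps `U` continuously into `Z(P)`.
  set N : (σ → ℝ) → (σ → ℝ) :=
    fun v ↦ Function.update v j (v j - eval v P / eval v (pderiv j P))
  have hN : ∀ v ∈ U, eval (N v) P = 0 := fun v hv ↦ by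
    rw [eval_update_eq_add_mul_pderiv hP]
    field_simp [show eval v (pderiv j P) ≠ 0 from hv]
    ring
  have hNc : ContinuousOn N U := (continuous_update j).comp_continuousOn <|
    continuousOn_id.prodMk <| (continuous_apply j).continuousOn.sub <|
      (continuous_eval P).continuousOn.div (continuous_eval _).continuousOn fun v hv ↦ hv
  have hzw : JoinedIn (Metric.ball z ρ) z w := JoinedIn.of_segment_subset
    ((convex_ball z ρ).segment_subset (Metric.mem_ball_self hρ) hw)
  refine ⟨N w, ?_, by rwa [eval_update_of_pderiv_eq_zero hgj]⟩
  have := (hzw.map_continuousOn (hNc.mono hball)).mono (V := {v | eval v P = 0})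
    (Set.image_subset_iff.2 fun v hv ↦ hN v (hball hv))
  simpa [N, hz] using this

theorem exists_joinedIn_of_specializeVar {P : MvPolynomial σ ℝ} {i j : σ} (hij : i ≠ j) {a : ℝ}
    {x : σ → ℝ} (h : ∃ z, JoinedIn {v | eval v (specializeVar j a P) = 0} x z ∧
      eval z (pderiv i (specializeVar j a P)) ≠ 0) :
    ∃ z, JoinedIn {v | eval v P = 0} (Function.update x j a) z ∧ eval z (pderiv i P) ≠ 0 := by
  obtain ⟨z, hxz, hz⟩ := h
  refine ⟨Function.update z j a, hxz.update_of_specializeVar, ?_⟩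
  rwa [pderiv_specializeVar_of_ne hij, eval_specializeVar] at hz

theorem exists_joinedIn_of_eval_pderiv_pderiv_ne_zero {P : MvPolynomial σ ℝ}
    (hP : P.IsMultiAffine) {k j : σ} {x : σ → ℝ} (hx : eval x P = 0)
    (hqx : eval x (pderiv k P) = 0) (hAx : eval x (pderiv j (pderiv k P)) ≠ 0) :
    ∃ z, JoinedIn {v | eval v P = 0} x z ∧ eval z (pderiv k P) ≠ 0 := by
  set A := pderiv j (pderiv k P)
  have hAk : pderiv k A = 0 := by rw [pderiv_pderiv_comm, hP k, map_zero]
  have hkj : pderiv k (pderiv j P) = A := pderiv_pderiv_comm _ _ _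
  set x' := Function.update x k (x k - eval x (pderiv j P) / eval x A)
  have hxx' : JoinedIn {v | eval v P = 0} x x' := joinedIn_update (hP k) hx hqx _
  have hx'j : eval x' (pderiv j P) = 0 := by
    rw [eval_update_eq_add_mul_pderiv (hP.pderiv j k), hkj]
    field_simp
    ring
  have hqx' : eval x' (pderiv k P) = 0 := by
    rw [eval_update_of_pderiv_eq_zero (hP k), hqx]
  have hAx' : eval x' A = eval x A := eval_update_of_pderiv_eq_zero hAk _ _
  refine ⟨Function.update x' j (x' j + 1),
    hxx'.trans (joinedIn_update (hP j) hxx'.target_mem hx'j _), ?_⟩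
  rw [eval_update_eq_add_mul_pderiv (hP.pderiv k j), hqx', hAx']
  simpa using hAx

variable [Fintype σ]

theorem exists_joinedIn_of_specializeVar_eq_zero {P : MvPolynomial σ ℝ} (hP : P.IsMultiAffine)
    {k j : σ} {x : σ → ℝ} (hB : specializeVar j (x j) (pderiv k P) = 0)
    (hD : specializeVar j (x j) P = 0) (hA : pderiv j (pderiv k P) ≠ 0) :
    ∃ z, JoinedIn {v | eval v P = 0} x z ∧ eval z (pderiv k P) ≠ 0 := by
  obtain ⟨w, -, hw⟩ := exists_mem_eval_ne_zero_of_isOpen hA isOpen_univ (Set.mem_univ x)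
  have hxw : JoinedIn {v | eval v P = 0} x (Function.update w j (x j)) := by
    simpa using ((joinedIn_univ.2 (PathConnectedSpace.joined x w)).mono
      (V := {v | eval v (specializeVar j (x j) P) = 0}) (by simp [hD])).update_of_specializeVar
  obtain ⟨z, hwz, hz⟩ := exists_joinedIn_of_eval_pderiv_pderiv_ne_zero hP hxw.target_mem
    (by rw [← eval_specializeVar, hB, map_zero])
    (by rwa [eval_update_of_pderiv_eq_zero (hP.pderiv k j)])
  exact ⟨z, hxw.trans hwz, hz⟩

theorem exists_joinedIn_of_specializeVar_pderiv_eq_zero {P : MvPolynomial σ ℝ}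
    (hP : P.IsMultiAffine) {k j : σ} {a : ℝ} (hB : specializeVar j a (pderiv k P) = 0)
    (hD : specializeVar j a P ≠ 0) (hA : pderiv j (pderiv k P) ≠ 0) {z : σ → ℝ}
    (hz : eval z P = 0) (hzj : eval z (pderiv j P) ≠ 0) :
    ∃ w, JoinedIn {v | eval v P = 0} z w ∧ eval w (pderiv k P) ≠ 0 := by
  have hgj : pderiv j (pderiv j (pderiv k P) * specializeVar j a P) = 0 := by
    rw [pderiv_mul, hP.pderiv k j, pderiv_specializeVar_self, zero_mul, mul_zero, add_zero]
  obtain ⟨w, hzw, hw⟩ := exists_joinedIn_eval_ne_zero (hP j) hz hzj (mul_ne_zero hA hD) hgj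
  refine ⟨w, hzw, ?_⟩
  rw [map_mul] at hw
  have hPw := eval_eq_eval_specializeVar_add_mul_pderiv (hP j) a w
  rw [eval_eq_eval_specializeVar_add_mul_pderiv (hP.pderiv k j) a w, hB, map_zero, zero_add]
  refine mul_ne_zero (fun h ↦ right_ne_zero_of_mul hw ?_) (left_ne_zero_of_mul hw)
  rw [h, zero_mul, add_zero, hzw.target_mem] at hPw
  exact hPw.symm

theorem exists_joinedIn_eval_pderiv_ne_zero {P : MvPolynomial σ ℝ} (hP : P.IsMultiAffine) {k : σ}
    (hk : pderiv k P ≠ 0) {x : σ → ℝ} (hx : eval x P = 0) :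
    ∃ z, JoinedIn {v | eval v P = 0} x z ∧ eval z (pderiv k P) ≠ 0 := by
  induction hN : {i | pderiv i P ≠ 0}.ncard using Nat.strong_induction_on generalizing P k x with
  | _ N ih =>
  subst hN
  obtain hqx | hqx := ne_or_eq (eval x (pderiv k P)) 0
  · exact ⟨x, .refl hx, hqx⟩
  obtain ⟨j, hA⟩ := exists_pderiv_ne_zero_s4 hk hqx
  obtain hAx | hAx := ne_or_eq (eval x (pderiv j (pderiv k P))) 0
  · exact exists_joinedIn_of_eval_pderiv_pderiv_ne_zero hP hx hqx hAx
  have hjk : j ≠ k := by rintro rfl; exact hA (hP j)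
  have hPj : pderiv j P ≠ 0 := fun h ↦ hA (by rw [pderiv_pderiv_comm, h, map_zero])
  obtain hB | hB := ne_or_eq (specializeVar j (x j) (pderiv k P)) 0
  · simpa using exists_joinedIn_of_specializeVar hjk.symm <|
      ih _ (ncard_pderiv_ne_zero_specializeVar_lt hPj _) (hP.specializeVar j (x j))
        (by rwa [pderiv_specializeVar_of_ne hjk.symm]) (x := x) (by simpa [eval_specializeVar]) rfl
  by_cases hD : specializeVar j (x j) P = 0
  · exact exists_joinedIn_of_specializeVar_eq_zero hP hB hD hA
  obtain ⟨c, hc⟩ := exists_specializeVar_ne_zero hPj k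
  have hxc : JoinedIn {v | eval v P = 0} x (Function.update x k c) :=
    joinedIn_update (hP k) hx hqx c
  obtain ⟨z, hxz, hz⟩ := exists_joinedIn_of_specializeVar hjk <|
    ih _ (ncard_pderiv_ne_zero_specializeVar_lt hk c) (hP.specializeVar k c)
      (by rwa [pderiv_specializeVar_of_ne hjk])
      (x := Function.update x k c) (by simpa [eval_specializeVar] using hxc.target_mem) rfl
  rw [Function.update_idem] at hxz
  obtain ⟨w, hzw, hw⟩ :=
    exists_joinedIn_of_specializeVar_pderiv_eq_zero hP hB hD hA hxz.target_mem hz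
  exact ⟨w, hxc.trans (hxz.trans hzw), hw⟩

end MvPolynomial

theorem no_component_in_ZQ_general (n : ℕ)
    (P Q R : MvPolynomial (Fin n) ℝ)
    (hma : ∀ i : Fin n, P.degreeOf i ≤ 1)
    (i₀ : Fin n)
    (hQ : Q.degreeOf i₀ = 0) (hR : R.degreeOf i₀ = 0)
    (hPQR : P = X i₀ * Q + R) (hQ0 : Q ≠ 0) :
    ∀ x ∈ {y : Fin n → ℝ | eval y P = 0},
      ¬ (connectedComponentIn {y : Fin n → ℝ | eval y P = 0} x
          ⊆ {y : Fin n → ℝ | eval y Q = 0}) := by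
  have hpderiv {p : MvPolynomial (Fin n) ℝ} (hp : p.degreeOf i₀ = 0) : pderiv i₀ p = 0 :=
    pderiv_eq_zero_of_notMem_vars (by rwa [mem_vars_iff_degreeOf_ne_zero, not_not])
  have hPQ : pderiv i₀ P = Q := by
    rw [hPQR, map_add, pderiv_mul, pderiv_X_self, hpderiv hQ, hpderiv hR, mul_zero, add_zero,
      add_zero, one_mul]
  intro x hx hsub
  obtain ⟨z, hxz, hz⟩ := exists_joinedIn_eval_pderiv_ne_zero
    (isMultiAffine_of_degreeOf_le_one hma) (hPQ ▸ hQ0) hx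
  exact hPQ ▸ hz <| hsub hxz.mem_connectedComponentIn

/-- If `P = X_n · Q + R` is an irreducible multi-affine polynomial with `Q ≠ 0` (and `Q`, `R`
not involving `X_n`), then no connected component of `Z(P, ℝ^n)` is contained in `Z(Q, ℝ^n)`. -/
theorem no_component_in_ZQ (n : ℕ) (hn : 1 ≤ n)
    (P Q R : MvPolynomial (Fin n) ℝ)
    (hma : ∀ i : Fin n, P.degreeOf i ≤ 1)
    (hirr : Irreducible P)
    (i₀ : Fin n) (hi₀ : (i₀ : ℕ) = n - 1)
    (hQ : Q.degreeOf i₀ = 0) (hR : R.degreeOf i₀ = 0)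
    (hPQR : P = X i₀ * Q + R) (hQ0 : Q ≠ 0) :
    ∀ x ∈ {y : Fin n → ℝ | eval y P = 0},
      ¬ (connectedComponentIn {y : Fin n → ℝ | eval y P = 0} x
          ⊆ {y : Fin n → ℝ | eval y Q = 0}) :=
  no_component_in_ZQ_general n P Q R hma i₀ hQ hR hPQR hQ0
end
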